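/- arXiv:math/0005125 — 8 statements merged into one kernel-verified Lean document; each statement's English description precedes it below -/
import Mathlib

section
/- Let ∇ be a connection with connection form ω and curvature R. Then for every infinitesimal 2-simplex (x,y,z) in P, with a = π(x), b = π(y), c = π(z), one has R(a,b,c) ∘ x = x ∘ dω(x,y,z); that is, ∇(a,b) ∘ ∇(b,c) ∘ ∇(c,a) ∘ x = x ∘ ω(x,y) ∘ ω(y,z) ∘ ω(z,x) as arrows e → a in Φ. (This is the identity R̂ = dω: the curvature form of the connection equals the coboundary of its connection form.) -/
open CategoryTheory

/-- The principal bundle `P`: arrows of the groupoid `Φ` with domain `e` and codomain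
in a set `M` of objects.  For `x : Bdl e M`, `x.1` is the codomain `π x ∈ M` and
`x.2 : e ⟶ x.1` is the arrow itself. -/
def Bdl {Φ : Type*} [Groupoid Φ] (e : Φ) (M : Set Φ) : Type _ :=
  Σ a : M, e ⟶ (a : Φ)

/-- The right action of the group `G = Φ(e,e)` on `P` by precomposition:
`x · g = x ∘ g`. -/
def Bdl.act {Φ : Type*} [Groupoid Φ] {e : Φ} {M : Set Φ}
    (x : Bdl e M) (g : e ⟶ e) : Bdl e M :=
  ⟨x.1, g ≫ x.2⟩

/-- A connection: to each pair `a ∼ b` in `M` it assigns an arrow `∇(a,b) : b ⟶ a`,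
with `∇(a,a) = id` and `∇(b,a) = ∇(a,b)⁻¹`. -/
structure Conn {Φ : Type*} [Groupoid Φ] (e : Φ) (M : Set Φ) (nbM : M → M → Prop) where
  map : ∀ a b : M, nbM a b → ((b : Φ) ⟶ (a : Φ))
  map_refl : ∀ (a : M) (h : nbM a a), map a a h = 𝟙 (a : Φ)
  map_symm : ∀ (a b : M) (h : nbM a b) (h' : nbM b a),
    map b a h' = Groupoid.inv (map a b h)

/-- The connection form `ω(x,y) = x⁻¹ ∘ ∇(π x, π y) ∘ y ∈ G`
(composition right-to-left; in Lean's diagrammatic order: `y ≫ ∇ ≫ x⁻¹`). -/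
def connForm {Φ : Type*} [Groupoid Φ] {e : Φ} {M : Set Φ} {nbM : M → M → Prop}
    (D : Conn e M nbM) (x y : Bdl e M) (h : nbM x.1 y.1) : e ⟶ e :=
  y.2 ≫ D.map x.1 y.1 h ≫ Groupoid.inv x.2

/-- for a connection `∇` with connection form `ω` and curvature `R`,
and every infinitesimal 2-simplex `(x,y,z)` in `P` over `(a,b,c)` in `M`,
`R(a,b,c) ∘ x = x ∘ dω(x,y,z)`, i.e.
`∇(a,b) ∘ ∇(b,c) ∘ ∇(c,a) ∘ x = x ∘ ω(x,y) ∘ ω(y,z) ∘ ω(z,x)` as arrows `e ⟶ a`.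
(In Lean's diagrammatic order `f ≫ g` = "`f` first", so
`R ∘ x = x ≫ (∇(c,a)-part ≫ ∇(b,c)-part ≫ ∇(a,b)-part)` and
`x ∘ dω = (ω(z,x) ≫ ω(y,z) ≫ ω(x,y)) ≫ x`.) -/
theorem stmt0 {Φ : Type*} [Groupoid Φ] (e : Φ) (M : Set Φ)
    (nbM : M → M → Prop) (nbP : Bdl e M → Bdl e M → Prop)
    (hMrefl : ∀ a, nbM a a) (hMsymm : ∀ a b, nbM a b → nbM b a)
    (hPrefl : ∀ x, nbP x x) (hPsymm : ∀ x y, nbP x y → nbP y x)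
    (hcompat : ∀ x y : Bdl e M, nbP x y → nbM x.1 y.1)
    (D : Conn e M nbM)
    (x y z : Bdl e M)
    (hxy : nbP x y) (hyz : nbP y z) (hzx : nbP z x) :
    x.2 ≫ (D.map z.1 x.1 (hcompat z x hzx) ≫ D.map y.1 z.1 (hcompat y z hyz) ≫
        D.map x.1 y.1 (hcompat x y hxy))
      = (connForm D z x (hcompat z x hzx) ≫ connForm D y z (hcompat y z hyz) ≫
          connForm D x y (hcompat x y hxy)) ≫ x.2 := by
  simp [connForm, Groupoid.comp_inv, Groupoid.inv_comp]
end

section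
/- Call a G-valued 1-form a function ω assigning to each pair x ∼ y in P an element ω(x,y) ∈ G with ω(x,x) = id_e and ω(y,x) = ω(x,y)⁻¹. Assume ∼ on P is G-invariant (for every g ∈ G, x ∼ y implies x·g ∼ y·g), every fibre P_a (a ∈ M) is nonempty, and for every pair a ∼ b in M and every x ∈ P_a there exists y ∈ P_b with x ∼ y. Then the assignment sending a connection ∇ to its connection form ω is a bijection from the set of connections onto the set of G-valued 1-forms ω satisfying: (i) ω(x·g, y) = g⁻¹ ∘ ω(x,y) whenever x ∼ y and x·g ∼ y; and (ii) ω(x·g, y·g) = g⁻¹ ∘ ω(x,y) ∘ g for all g ∈ G whenever x ∼ y. -/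
open CategoryTheory

/-- A `G`-valued 1-form: a function assigning to each pair `x ∼ y` in `P` an
element of `G = Φ(e,e)`, with `ω(x,x) = id` and `ω(y,x) = ω(x,y)⁻¹`, and
satisfying the two conditions:
(i)  `ω(x·g, y) = g⁻¹ ∘ ω(x,y)` whenever `x ∼ y` and `x·g ∼ y`;
(ii) `ω(x·g, y·g) = g⁻¹ ∘ ω(x,y) ∘ g` for all `g ∈ G` whenever `x·g ∼ y·g`. -/
def IsConnectionForm {Φ : Type*} [Groupoid Φ] {e : Φ} {M : Set Φ}
    (nbP : Bdl e M → Bdl e M → Prop)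
    (ω : ∀ x y : Bdl e M, nbP x y → (e ⟶ e)) : Prop :=
  (∀ (x : Bdl e M) (h : nbP x x), ω x x h = 𝟙 e) ∧
  (∀ (x y : Bdl e M) (h : nbP x y) (h' : nbP y x),
    ω y x h' = Groupoid.inv (ω x y h)) ∧
  (∀ (x y : Bdl e M) (g : e ⟶ e) (h : nbP x y) (h' : nbP (x.act g) y),
    ω (x.act g) y h' = ω x y h ≫ Groupoid.inv g) ∧
  (∀ (x y : Bdl e M) (g : e ⟶ e) (h : nbP x y) (h' : nbP (x.act g) (y.act g)),
    ω (x.act g) (y.act g) h' = g ≫ ω x y h ≫ Groupoid.inv g)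

/-!
A connection form determines its connection: for `x ∈ P_a`, `y ∈ P_b` with `x ∼ y`, the arrow
`x ∘ ω(x,y) ∘ y⁻¹ : b → a` (in Lean's order `y⁻¹ ≫ ω ≫ x`) is `∇(a,b)` when `ω` comes from `∇`.
Conversely, for an abstract 1-form `ω` satisfying (i) and (ii) this arrow does not depend on the
chosen frames: any other pair is `(x·g, y·g·k)`, condition (ii) absorbs `g` and condition (i),
transported to the second slot by the symmetry of `ω`, absorbs `k`. So it defines a connection
whose form is `ω`; nonempty fibres and the lifting of neighbour pairs ensure that every
`∇(a,b)` is read off from some pair of frames, which gives injectivity.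
-/

section

variable {Φ : Type*} [Groupoid Φ] {e : Φ} {M : Set Φ}

lemma Conn.ext {nbM : M → M → Prop} {D D' : Conn e M nbM} (h : D.map = D'.map) : D = D' := by
  cases D; cases D'; cases h; rfl

lemma Conn.map_eq_inv_comp_connForm_comp {nbM : M → M → Prop} (D : Conn e M nbM) {a b : M}
    (h : nbM a b) (x : e ⟶ (a : Φ)) (y : e ⟶ (b : Φ)) :
    D.map a b h = Groupoid.inv y ≫ connForm D ⟨a, x⟩ ⟨b, y⟩ h ≫ x := by
  simp [connForm, Groupoid.inv_eq_inv]

lemma isConnectionForm_connForm {nbM : M → M → Prop} {nbP : Bdl e M → Bdl e M → Prop}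
    (D : Conn e M nbM) (hcompat : ∀ x y : Bdl e M, nbP x y → nbM x.1 y.1) :
    IsConnectionForm nbP (fun x y h => connForm D x y (hcompat x y h)) := by
  refine ⟨fun x h => ?_, fun x y h h' => ?_, fun x y g h h' => ?_, fun x y g h h' => ?_⟩
  · simp [connForm, D.map_refl]
  · simp [connForm, D.map_symm x.1 y.1 (hcompat x y h) (hcompat y x h'), Groupoid.inv_eq_inv]
  · simp [connForm, Bdl.act, Groupoid.inv_eq_inv]
  · simp [connForm, Bdl.act, Groupoid.inv_eq_inv]

lemma connForm_injective {nbM : M → M → Prop} {nbP : Bdl e M → Bdl e M → Prop}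
    (hcompat : ∀ x y : Bdl e M, nbP x y → nbM x.1 y.1)
    (hne : ∀ a : M, Nonempty (e ⟶ (a : Φ)))
    (hsub : ∀ (a b : M), nbM a b → ∀ x : e ⟶ (a : Φ), ∃ y : e ⟶ (b : Φ), nbP ⟨a, x⟩ ⟨b, y⟩)
    {D D' : Conn e M nbM}
    (hDD' : (fun x y h => connForm D x y (hcompat x y h)) =
      (fun x y h => connForm D' x y (hcompat x y h))) :
    D = D' := by
  refine Conn.ext (funext fun a => funext fun b => funext fun h => ?_)
  obtain ⟨x⟩ := hne a
  obtain ⟨y, hxy⟩ := hsub a b h x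
  have hω := congrFun (congrFun (congrFun hDD' ⟨a, x⟩) ⟨b, y⟩) hxy
  rw [D.map_eq_inv_comp_connForm_comp h x y, D'.map_eq_inv_comp_connForm_comp h x y]
  exact congrArg (Groupoid.inv y ≫ · ≫ x) hω

namespace IsConnectionForm

variable {nbP : Bdl e M → Bdl e M → Prop} {ω : ∀ x y : Bdl e M, nbP x y → (e ⟶ e)}

lemma act_right (hPsymm : ∀ x y, nbP x y → nbP y x) (hω : IsConnectionForm nbP ω)
    (x y : Bdl e M) (g : e ⟶ e) (h : nbP x y) (h' : nbP x (y.act g)) :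
    ω x (y.act g) h' = g ≫ ω x y h := by
  obtain ⟨-, hsymm, hact, -⟩ := hω
  rw [hsymm _ _ (hPsymm _ _ h') h', hact y x g (hPsymm _ _ h) (hPsymm _ _ h'),
    hsymm _ _ (hPsymm _ _ h) h]
  simp [Groupoid.inv_eq_inv]

/-- The candidate for `∇(a,b)`, read off from `ω` at the frames `x ∈ P_a`, `y ∈ P_b`. -/
def arrowAt (ω : ∀ x y : Bdl e M, nbP x y → (e ⟶ e)) {a b : M} (x : e ⟶ (a : Φ))
    (y : e ⟶ (b : Φ)) (h : nbP ⟨a, x⟩ ⟨b, y⟩) : (b : Φ) ⟶ a :=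
  Groupoid.inv y ≫ ω ⟨a, x⟩ ⟨b, y⟩ h ≫ x

lemma arrowAt_self (hω : IsConnectionForm nbP ω) {a : M} (x : e ⟶ (a : Φ))
    (h : nbP ⟨a, x⟩ ⟨a, x⟩) : arrowAt ω x x h = 𝟙 (a : Φ) := by
  simp [arrowAt, hω.1 _ h, Groupoid.inv_eq_inv]

lemma arrowAt_symm (hω : IsConnectionForm nbP ω) {a b : M} (x : e ⟶ (a : Φ))
    (y : e ⟶ (b : Φ)) (h : nbP ⟨a, x⟩ ⟨b, y⟩) (h' : nbP ⟨b, y⟩ ⟨a, x⟩) :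
    arrowAt ω y x h' = Groupoid.inv (arrowAt ω x y h) := by
  simp [arrowAt, hω.2.1 _ _ h h', Groupoid.inv_eq_inv]

lemma arrowAt_comp_comp (hω : IsConnectionForm nbP ω) {a b : M} (g : e ⟶ e)
    (x : e ⟶ (a : Φ)) (y : e ⟶ (b : Φ)) (h : nbP ⟨a, x⟩ ⟨b, y⟩)
    (h' : nbP ⟨a, g ≫ x⟩ ⟨b, g ≫ y⟩) :
    arrowAt ω (g ≫ x) (g ≫ y) h' = arrowAt ω x y h := by
  have hg : ω ⟨a, g ≫ x⟩ ⟨b, g ≫ y⟩ h' = g ≫ ω ⟨a, x⟩ ⟨b, y⟩ h ≫ Groupoid.inv g :=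
    hω.2.2.2 ⟨a, x⟩ ⟨b, y⟩ g h h'
  simp [arrowAt, hg, Groupoid.inv_eq_inv]

lemma arrowAt_comp_right (hPsymm : ∀ x y, nbP x y → nbP y x) (hω : IsConnectionForm nbP ω)
    {a b : M} (k : e ⟶ e) (x : e ⟶ (a : Φ)) (y : e ⟶ (b : Φ)) (h : nbP ⟨a, x⟩ ⟨b, y⟩)
    (h' : nbP ⟨a, x⟩ ⟨b, k ≫ y⟩) :
    arrowAt ω x (k ≫ y) h' = arrowAt ω x y h := by
  have hk : ω ⟨a, x⟩ ⟨b, k ≫ y⟩ h' = k ≫ ω ⟨a, x⟩ ⟨b, y⟩ h :=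
    hω.act_right hPsymm ⟨a, x⟩ ⟨b, y⟩ k h h'
  simp [arrowAt, hk, Groupoid.inv_eq_inv]

lemma arrowAt_eq (hPsymm : ∀ x y, nbP x y → nbP y x)
    (hGinv : ∀ (x y : Bdl e M) (g : e ⟶ e), nbP x y → nbP (x.act g) (y.act g))
    (hω : IsConnectionForm nbP ω) {a b : M} (x x' : e ⟶ (a : Φ)) (y y' : e ⟶ (b : Φ))
    (h : nbP ⟨a, x⟩ ⟨b, y⟩) (h' : nbP ⟨a, x'⟩ ⟨b, y'⟩) :
    arrowAt ω x' y' h' = arrowAt ω x y h := by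
  obtain ⟨g, rfl⟩ : ∃ g : e ⟶ e, x' = g ≫ x := ⟨x' ≫ Groupoid.inv x, by simp⟩
  obtain ⟨k, rfl⟩ : ∃ k : e ⟶ e, y' = k ≫ g ≫ y := ⟨y' ≫ Groupoid.inv (g ≫ y), by simp⟩
  have hg : nbP ⟨a, g ≫ x⟩ ⟨b, g ≫ y⟩ := hGinv ⟨a, x⟩ ⟨b, y⟩ g h
  rw [arrowAt_comp_right hPsymm hω k _ _ hg, arrowAt_comp_comp hω g x y h hg]

variable {nbM : M → M → Prop}

noncomputable def toConn (hPrefl : ∀ x, nbP x x) (hPsymm : ∀ x y, nbP x y → nbP y x)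
    (hGinv : ∀ (x y : Bdl e M) (g : e ⟶ e), nbP x y → nbP (x.act g) (y.act g))
    (hω : IsConnectionForm nbP ω) (hne : ∀ a : M, Nonempty (e ⟶ (a : Φ)))
    (hsub : ∀ (a b : M), nbM a b → ∀ x : e ⟶ (a : Φ), ∃ y : e ⟶ (b : Φ), nbP ⟨a, x⟩ ⟨b, y⟩) :
    Conn e M nbM where
  map a b h := arrowAt ω _ _ (hsub a b h (hne a).some).choose_spec
  map_refl a h := by
    rw [arrowAt_eq hPsymm hGinv hω (hne a).some _ (hne a).some _ (hPrefl _)]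
    exact arrowAt_self hω _ _
  map_symm a b h h' := by
    rw [arrowAt_eq hPsymm hGinv hω _ _ (hne a).some _
      (hPsymm _ _ (hsub a b h (hne a).some).choose_spec)]
    exact arrowAt_symm hω _ _ _ _

lemma connForm_toConn (hPrefl : ∀ x, nbP x x) (hPsymm : ∀ x y, nbP x y → nbP y x)
    (hGinv : ∀ (x y : Bdl e M) (g : e ⟶ e), nbP x y → nbP (x.act g) (y.act g))
    (hω : IsConnectionForm nbP ω) (hne : ∀ a : M, Nonempty (e ⟶ (a : Φ)))
    (hsub : ∀ (a b : M), nbM a b → ∀ x : e ⟶ (a : Φ), ∃ y : e ⟶ (b : Φ), nbP ⟨a, x⟩ ⟨b, y⟩)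
    (hcompat : ∀ x y : Bdl e M, nbP x y → nbM x.1 y.1) :
    (fun x y h => connForm (toConn hPrefl hPsymm hGinv hω hne hsub) x y (hcompat x y h)) = ω := by
  funext ⟨a, x⟩ ⟨b, y⟩ h
  simp only [connForm, toConn]
  rw [arrowAt_eq hPsymm hGinv hω x _ y _ h]
  simp [arrowAt, Groupoid.inv_eq_inv]

end IsConnectionForm

end

theorem stmt1_general {Φ : Type*} [Groupoid Φ] (e : Φ) (M : Set Φ)
    (nbM : M → M → Prop) (nbP : Bdl e M → Bdl e M → Prop)
    (hPrefl : ∀ x, nbP x x) (hPsymm : ∀ x y, nbP x y → nbP y x)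
    (hcompat : ∀ x y : Bdl e M, nbP x y → nbM x.1 y.1)
    (hGinv : ∀ (x y : Bdl e M) (g : e ⟶ e), nbP x y → nbP (x.act g) (y.act g))
    (hne : ∀ a : M, Nonempty (e ⟶ (a : Φ)))
    (hsub : ∀ (a b : M), nbM a b → ∀ x : e ⟶ (a : Φ),
      ∃ y : e ⟶ (b : Φ), nbP ⟨a, x⟩ ⟨b, y⟩) :
    (∀ D : Conn e M nbM,
      IsConnectionForm nbP (fun x y h => connForm D x y (hcompat x y h))) ∧
    (∀ D D' : Conn e M nbM,
      (fun x y h => connForm D x y (hcompat x y h)) =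
        (fun x y h => connForm D' x y (hcompat x y h)) → D = D') ∧
    (∀ ω : ∀ x y : Bdl e M, nbP x y → (e ⟶ e), IsConnectionForm nbP ω →
      ∃ D : Conn e M nbM, (fun x y h => connForm D x y (hcompat x y h)) = ω) :=
  ⟨fun D => isConnectionForm_connForm D hcompat,
    fun _ _ => connForm_injective hcompat hne hsub,
    fun _ hω => ⟨_, hω.connForm_toConn hPrefl hPsymm hGinv hne hsub hcompat⟩⟩

/-- under the stated hypotheses (G-invariance of `∼`, nonempty fibres,
lifting of neighbour pairs), the assignment sending a connection `∇` to its
connection form `ω` is a bijection from the set of connections onto the set of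
`G`-valued 1-forms satisfying (i) and (ii): it lands in that set, is injective,
and is surjective onto it. -/
theorem stmt1 {Φ : Type*} [Groupoid Φ] (e : Φ) (M : Set Φ)
    (nbM : M → M → Prop) (nbP : Bdl e M → Bdl e M → Prop)
    (hMrefl : ∀ a, nbM a a) (hMsymm : ∀ a b, nbM a b → nbM b a)
    (hPrefl : ∀ x, nbP x x) (hPsymm : ∀ x y, nbP x y → nbP y x)
    (hcompat : ∀ x y : Bdl e M, nbP x y → nbM x.1 y.1)
    (hGinv : ∀ (x y : Bdl e M) (g : e ⟶ e), nbP x y → nbP (x.act g) (y.act g))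
    (hne : ∀ a : M, Nonempty (e ⟶ (a : Φ)))
    (hsub : ∀ (a b : M), nbM a b → ∀ x : e ⟶ (a : Φ),
      ∃ y : e ⟶ (b : Φ), nbP ⟨a, x⟩ ⟨b, y⟩) :
    (∀ D : Conn e M nbM,
      IsConnectionForm nbP (fun x y h => connForm D x y (hcompat x y h))) ∧
    (∀ D D' : Conn e M nbM,
      (fun x y h => connForm D x y (hcompat x y h)) =
        (fun x y h => connForm D' x y (hcompat x y h)) → D = D') ∧
    (∀ ω : ∀ x y : Bdl e M, nbP x y → (e ⟶ e), IsConnectionForm nbP ω →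
      ∃ D : Conn e M nbM, (fun x y h => connForm D x y (hcompat x y h)) = ω) :=
  stmt1_general e M nbM nbP hPrefl hPsymm hcompat hGinv hne hsub
end

section
/- Assume G = Φ(e,e) is commutative, ∼ on P is G-invariant (for every g ∈ G, x ∼ y implies x·g ∼ y·g), every fibre P_a (a ∈ M) is nonempty, and π is a submersion: for every infinitesimal k-simplex (a₀,…,a_k) in M and every x₀ ∈ P_{a₀} there exists an infinitesimal k-simplex (x₀,…,x_k) in P with first vertex x₀ and π(x_i) = a_i for all i. Then for every horizontal equivariant G-valued k-form θ on P there is a unique G-valued k-form Θ on M (a function assigning to each infinitesimal k-simplex in M an element of G) such that θ = π*Θ, i.e. θ(u₀,…,u_k) = Θ(π(u₀),…,π(u_k)) for every infinitesimal k-simplex (u₀,…,u_k) in P. -/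
open CategoryTheory

/-- An infinitesimal `k`-simplex in `P`: a `(k+1)`-tuple of pairwise neighbours. -/
def IsSimplex {Φ : Type*} [Groupoid Φ] {e : Φ} {M : Set Φ}
    (nbP : Bdl e M → Bdl e M → Prop) {k : ℕ} (u : Fin (k + 1) → Bdl e M) : Prop :=
  ∀ i j, nbP (u i) (u j)

/-- A `G`-valued `k`-form `θ` on `P` is horizontal if
`θ(u₀, u₁·g₁, …, u_k·g_k) = θ(u₀,…,u_k)` whenever both tuples are infinitesimal
`k`-simplices. -/
def Horizontal {Φ : Type*} [Groupoid Φ] {e : Φ} {M : Set Φ}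
    (nbP : Bdl e M → Bdl e M → Prop) {k : ℕ}
    (θ : ∀ u : Fin (k + 1) → Bdl e M, IsSimplex nbP u → (e ⟶ e)) : Prop :=
  ∀ (u : Fin (k + 1) → Bdl e M) (g : Fin k → (e ⟶ e))
    (hu : IsSimplex nbP u)
    (hu' : IsSimplex nbP (Fin.cases (u 0) (fun i => (u i.succ).act (g i)))),
    θ (Fin.cases (u 0) (fun i => (u i.succ).act (g i))) hu' = θ u hu

/-- A `G`-valued `k`-form `θ` on `P` is equivariant if
`θ(u₀·g, …, u_k·g) = g⁻¹ ∘ θ(u₀,…,u_k) ∘ g` whenever the shifted tuple is an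
infinitesimal `k`-simplex. -/
def Equivariant {Φ : Type*} [Groupoid Φ] {e : Φ} {M : Set Φ}
    (nbP : Bdl e M → Bdl e M → Prop) {k : ℕ}
    (θ : ∀ u : Fin (k + 1) → Bdl e M, IsSimplex nbP u → (e ⟶ e)) : Prop :=
  ∀ (u : Fin (k + 1) → Bdl e M) (g : e ⟶ e)
    (hu : IsSimplex nbP u)
    (hu' : IsSimplex nbP (fun i => (u i).act g)),
    θ (fun i => (u i).act g) hu' = g ≫ θ u hu ≫ Groupoid.inv g

/-- if `G = Φ(e,e)` is commutative, `∼` on `P` is `G`-invariant, all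
fibres are nonempty and `π` is a submersion (every infinitesimal `k`-simplex in `M`
lifts, with prescribed first vertex, to one in `P`), then every horizontal
equivariant `G`-valued `k`-form `θ` on `P` is `π*Θ` for a unique `G`-valued
`k`-form `Θ` on `M`. -/
theorem stmt2 {Φ : Type*} [Groupoid Φ] (e : Φ) (M : Set Φ)
    (nbM : M → M → Prop) (nbP : Bdl e M → Bdl e M → Prop)
    (hMrefl : ∀ a, nbM a a) (hMsymm : ∀ a b, nbM a b → nbM b a)
    (hPrefl : ∀ x, nbP x x) (hPsymm : ∀ x y, nbP x y → nbP y x)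
    (hcompat : ∀ x y : Bdl e M, nbP x y → nbM x.1 y.1)
    (hGinv : ∀ (x y : Bdl e M) (g : e ⟶ e), nbP x y → nbP (x.act g) (y.act g))
    (hcomm : ∀ g h : e ⟶ e, g ≫ h = h ≫ g)
    (hne : ∀ a : M, Nonempty (e ⟶ (a : Φ)))
    (k : ℕ)
    (hsub : ∀ (a : Fin (k + 1) → M), (∀ i j, nbM (a i) (a j)) →
      ∀ x0 : e ⟶ (a 0 : Φ), ∃ x : (i : Fin (k + 1)) → (e ⟶ (a i : Φ)),
        x 0 = x0 ∧ IsSimplex nbP (fun i => ⟨a i, x i⟩))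
    (θ : ∀ u : Fin (k + 1) → Bdl e M, IsSimplex nbP u → (e ⟶ e))
    (hhor : Horizontal nbP θ) (hequi : Equivariant nbP θ) :
    ∃! Θ : ∀ a : Fin (k + 1) → M, (∀ i j, nbM (a i) (a j)) → (e ⟶ e),
      ∀ (u : Fin (k + 1) → Bdl e M) (hu : IsSimplex nbP u),
        θ u hu = Θ (fun i => (u i).1) (fun i j => hcompat _ _ (hu i j)) := by
  classical
  -- θ applied to equal tuples gives equal values
  have tcongr : ∀ (u v : Fin (k + 1) → Bdl e M) (h : u = v) (hu : IsSimplex nbP u)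
      (hv : IsSimplex nbP v), θ u hu = θ v hv := by
    intro u v h hu hv; subst h; rfl
  -- key: θ only depends on the projection of the simplex
  have key : ∀ (a : Fin (k + 1) → M) (x y : ∀ i, e ⟶ (a i : Φ))
      (hx : IsSimplex nbP (fun i => ⟨a i, x i⟩))
      (hy : IsSimplex nbP (fun i => ⟨a i, y i⟩)),
      θ (fun i => ⟨a i, x i⟩) hx = θ (fun i => ⟨a i, y i⟩) hy := by
    intro a x y hx hy
    have mkeq : ∀ (b : M) (p q : e ⟶ (b : Φ)), p = q →
        (⟨b, p⟩ : Bdl e M) = ⟨b, q⟩ := by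
      intro b p q h; rw [h]
    set g : Fin (k + 1) → (e ⟶ e) := fun i => y i ≫ Groupoid.inv (x i) with hg
    have hgx : ∀ i, g i ≫ x i = y i := by
      intro i; simp [hg, Category.assoc, Groupoid.inv_comp]
    have hw : IsSimplex nbP (fun i => Bdl.act ⟨a i, x i⟩ (g 0)) :=
      fun i j => hGinv ⟨a i, x i⟩ ⟨a j, x j⟩ (g 0) (hx i j)
    have heqv : θ (fun i => Bdl.act ⟨a i, x i⟩ (g 0)) hw
        = θ (fun i => ⟨a i, x i⟩) hx := by
      have := hequi (fun i => ⟨a i, x i⟩) (g 0) hx hw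
      rw [this, hcomm (g 0), Category.assoc, Groupoid.inv_comp, Category.comp_id]
    set gs : Fin k → (e ⟶ e) := fun i => g i.succ ≫ Groupoid.inv (g 0) with hgs
    have htup : (Fin.cases ((fun i => Bdl.act ⟨a i, x i⟩ (g 0)) 0)
        (fun i => ((fun i => Bdl.act ⟨a i, x i⟩ (g 0)) i.succ).act (gs i)) :
        Fin (k + 1) → Bdl e M) = fun i => ⟨a i, y i⟩ := by
      funext i
      induction i using Fin.cases with
      | zero =>
        show Bdl.act ⟨a 0, x 0⟩ (g 0) = _
        exact mkeq (a 0) _ _ (hgx 0)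
      | succ j =>
        show Bdl.act (Bdl.act ⟨a j.succ, x j.succ⟩ (g 0)) (gs j) = _
        refine mkeq (a j.succ) _ _ ?_
        show gs j ≫ g 0 ≫ x j.succ = y j.succ
        rw [← hgx j.succ, hgs]
        simp [Category.assoc, Groupoid.inv_comp]
    have hs' : IsSimplex nbP (Fin.cases ((fun i => Bdl.act ⟨a i, x i⟩ (g 0)) 0)
        (fun i => ((fun i => Bdl.act ⟨a i, x i⟩ (g 0)) i.succ).act (gs i))) := by
      rw [htup]; exact hy
    have h3 := hhor (fun i => Bdl.act ⟨a i, x i⟩ (g 0)) gs hw hs'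
    have h4 := tcongr _ _ htup.symm hy hs'
    rw [← heqv, ← h3, h4]
  -- the form on M
  refine ⟨fun a ha => θ (fun i => ⟨a i, ((hsub a ha (hne (a 0)).some).choose i)⟩)
      (hsub a ha (hne (a 0)).some).choose_spec.2, ?_, ?_⟩
  · intro u hu
    exact key (fun i => (u i).1) (fun i => (u i).2) _ hu _
  · intro Θ' hΘ'
    funext a ha
    obtain ⟨x, -, hxs⟩ := hsub a ha (hne (a 0)).some
    have h1 := hΘ' (fun i => ⟨a i, x i⟩) hxs
    have h2 : Θ' a ha = θ (fun i => ⟨a i, x i⟩) hxs := h1.symm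
    rw [h2]
    exact key a x _ hxs _
end

section
/- Assume ∼ on P is G-invariant (for every g ∈ G, x ∼ y implies x·g ∼ y·g), every fibre P_a (a ∈ M) is nonempty, and π is a submersion: for every infinitesimal k-simplex (a₀,…,a_k) in M and every x₀ ∈ P_{a₀} there exists an infinitesimal k-simplex (x₀,…,x_k) in P with first vertex x₀ and π(x_i) = a_i for all i. Then the assignments θ ↦ θ̌ with θ̌(a₀,…,a_k) = u₀ ∘ θ(u₀,…,u_k) ∘ u₀⁻¹ ∈ Φ(a₀,a₀) (computed using any infinitesimal k-simplex (u₀,…,u_k) in P with π(u_i) = a_i for all i) and α ↦ α̂ with α̂(u₀,…,u_k) = u₀⁻¹ ∘ α(π(u₀),…,π(u_k)) ∘ u₀ are well defined and are mutually inverse bijections between the set of horizontal equivariant G-valued k-forms on P and the set of gauge-valued k-forms on M. -/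
open CategoryTheory

/-- For a gauge-valued `k`-form `α` on `M`, the associated `G`-valued `k`-form
`α̂` on `P`: `α̂(u₀,…,u_k) = u₀⁻¹ ∘ α(π u₀, …, π u_k) ∘ u₀`. -/
def hatForm {Φ : Type*} [Groupoid Φ] {e : Φ} {M : Set Φ}
    {nbM : M → M → Prop} {nbP : Bdl e M → Bdl e M → Prop}
    (hcompat : ∀ x y : Bdl e M, nbP x y → nbM x.1 y.1) {k : ℕ}
    (α : ∀ a : Fin (k + 1) → M, (∀ i j, nbM (a i) (a j)) → ((a 0 : Φ) ⟶ (a 0 : Φ)))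
    (u : Fin (k + 1) → Bdl e M) (hu : IsSimplex nbP u) : e ⟶ e :=
  (u 0).2 ≫ α (fun i => (u i).1) (fun i j => hcompat _ _ (hu i j)) ≫ Groupoid.inv (u 0).2

/-!
Horizontality says that `θ(u₀,…,u_k)` depends only on `u₀` and the projections
`π uᵢ`; equivariance says how it changes when `u₀` is moved along its fibre. Since
`G` acts transitively on each fibre, conjugating by `u₀` removes this dependence,
so `u₀ ∘ θ(u) ∘ u₀⁻¹` depends only on the simplex `π u` in `M`. Both composites of
`θ ↦ θ̌` and `α ↦ α̂` then cancel a conjugation by `u₀` against its inverse.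
-/

namespace Bdl

variable {Φ : Type*} [Groupoid Φ] {e : Φ} {M : Set Φ} {k : ℕ}

def mkTuple (a : Fin (k + 1) → M) (x : ∀ i, e ⟶ (a i : Φ)) : Fin (k + 1) → Bdl e M :=
  fun i => ⟨a i, x i⟩

theorem mk_act_comp_inv {a : M} (x y : e ⟶ (a : Φ)) :
    Bdl.act (⟨a, x⟩ : Bdl e M) (y ≫ Groupoid.inv x) = ⟨a, y⟩ :=
  congrArg (Sigma.mk a) (by simp [Groupoid.inv_eq_inv])

end Bdl

open Bdl

section

variable {Φ : Type*} [Groupoid Φ] {e : Φ} {M : Set Φ}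
  {nbM : M → M → Prop} {nbP : Bdl e M → Bdl e M → Prop} {k : ℕ}
  {θ : ∀ u : Fin (k + 1) → Bdl e M, IsSimplex nbP u → (e ⟶ e)}
  (hcompat : ∀ x y : Bdl e M, nbP x y → nbM x.1 y.1)
  (α : ∀ a : Fin (k + 1) → M, (∀ i j, nbM (a i) (a j)) → ((a 0 : Φ) ⟶ (a 0 : Φ)))

theorem horizontal_iff_apply_mkTuple_eq :
    Horizontal nbP θ ↔ ∀ (a : Fin (k + 1) → M) (x y : ∀ i, e ⟶ (a i : Φ))
      (hx : IsSimplex nbP (mkTuple a x)) (hy : IsSimplex nbP (mkTuple a y)),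
      x 0 = y 0 → θ (mkTuple a x) hx = θ (mkTuple a y) hy := by
  constructor
  · intro hθ a x y hx hy h0
    have hy_eq : Fin.cases (mkTuple a x 0)
        (fun i => (mkTuple a x i.succ).act (y i.succ ≫ Groupoid.inv (x i.succ))) =
          mkTuple a y := by
      funext i
      refine Fin.cases ?_ (fun i => ?_) i
      · exact congrArg (Sigma.mk (a 0)) h0
      · exact mk_act_comp_inv _ _
    rw [← hθ (mkTuple a x) _ hx (hy_eq ▸ hy)]
    congr 1
  · intro h u g hu hu'
    have hv : Fin.cases (u 0) (fun i => (u i.succ).act (g i)) =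
        mkTuple (fun i => (u i).1) (Fin.cases (u 0).2 fun i => g i ≫ (u i.succ).2) := by
      funext i
      cases i using Fin.cases <;> rfl
    simp only [hv]
    exact h _ _ (fun i => (u i).2) _ hu rfl

theorem horizontal_hatForm : Horizontal nbP (hatForm hcompat α) := by
  refine horizontal_iff_apply_mkTuple_eq.mpr fun a x y hx hy h0 => ?_
  show x 0 ≫ α a _ ≫ Groupoid.inv (x 0) = y 0 ≫ α a _ ≫ Groupoid.inv (y 0)
  rw [h0]

theorem equivariant_hatForm : Equivariant nbP (hatForm hcompat α) := by
  intro u g hu hu'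
  simp [hatForm, act, Groupoid.inv_eq_inv]

theorem Horizontal.conj_apply_mkTuple_eq (hθ : Horizontal nbP θ) (hθ' : Equivariant nbP θ)
    (hGinv : ∀ (x y : Bdl e M) (g : e ⟶ e), nbP x y → nbP (x.act g) (y.act g))
    {a : Fin (k + 1) → M} {x y : ∀ i, e ⟶ (a i : Φ)} (hx : IsSimplex nbP (mkTuple a x))
    (hy : IsSimplex nbP (mkTuple a y)) :
    Groupoid.inv (x 0) ≫ θ (mkTuple a x) hx ≫ x 0 =
      Groupoid.inv (y 0) ≫ θ (mkTuple a y) hy ≫ y 0 := by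
  set g := x 0 ≫ Groupoid.inv (y 0)
  have hgy : IsSimplex nbP (mkTuple a fun i => g ≫ y i) := fun i j => hGinv _ _ g (hy i j)
  have hx_eq : θ (mkTuple a x) hx = g ≫ θ (mkTuple a y) hy ≫ Groupoid.inv g := by
    rw [horizontal_iff_apply_mkTuple_eq.mp hθ a x _ hx hgy (by simp [g, Groupoid.inv_eq_inv])]
    exact hθ' _ g hy hgy
  simp [hx_eq, g, Groupoid.inv_eq_inv]

theorem exists_isSimplex_mkTuple (hne : ∀ a : M, Nonempty (e ⟶ (a : Φ)))
    (hsub : ∀ (a : Fin (k + 1) → M), (∀ i j, nbM (a i) (a j)) →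
      ∀ x0 : e ⟶ (a 0 : Φ), ∃ x : (i : Fin (k + 1)) → (e ⟶ (a i : Φ)),
        x 0 = x0 ∧ IsSimplex nbP (fun i => ⟨a i, x i⟩))
    (a : Fin (k + 1) → M) (ha : ∀ i j, nbM (a i) (a j)) :
    ∃ x : ∀ i, e ⟶ (a i : Φ), IsSimplex nbP (mkTuple a x) :=
  let ⟨x, _, hx⟩ := hsub a ha (hne (a 0)).some
  ⟨x, hx⟩

variable (hlift : ∀ (a : Fin (k + 1) → M), (∀ i j, nbM (a i) (a j)) →
  ∃ x : ∀ i, e ⟶ (a i : Φ), IsSimplex nbP (mkTuple a x))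

/-- `θ̌`, computed with a chosen lift of each simplex of `M`. -/
noncomputable def checkForm (θ : ∀ u : Fin (k + 1) → Bdl e M, IsSimplex nbP u → (e ⟶ e))
    (a : Fin (k + 1) → M) (ha : ∀ i j, nbM (a i) (a j)) : (a 0 : Φ) ⟶ (a 0 : Φ) :=
  Groupoid.inv ((hlift a ha).choose 0) ≫ θ _ (hlift a ha).choose_spec ≫ (hlift a ha).choose 0

theorem checkForm_eq (hθ : Horizontal nbP θ) (hθ' : Equivariant nbP θ)
    (hGinv : ∀ (x y : Bdl e M) (g : e ⟶ e), nbP x y → nbP (x.act g) (y.act g))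
    (a : Fin (k + 1) → M) (ha : ∀ i j, nbM (a i) (a j)) (x : ∀ i, e ⟶ (a i : Φ))
    (hx : IsSimplex nbP (mkTuple a x)) :
    checkForm hlift θ a ha = Groupoid.inv (x 0) ≫ θ (mkTuple a x) hx ≫ x 0 :=
  hθ.conj_apply_mkTuple_eq hθ' hGinv _ hx

theorem checkForm_hatForm : checkForm hlift (hatForm hcompat α) = α := by
  funext a ha
  simp [checkForm, hatForm, mkTuple, Groupoid.inv_eq_inv]

theorem hatForm_checkForm (hθ : Horizontal nbP θ) (hθ' : Equivariant nbP θ)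
    (hGinv : ∀ (x y : Bdl e M) (g : e ⟶ e), nbP x y → nbP (x.act g) (y.act g)) :
    hatForm hcompat (checkForm hlift θ) = θ := by
  funext u hu
  rw [hatForm, checkForm_eq hlift hθ hθ' hGinv _ _ (fun i => (u i).2) hu]
  show (u 0).2 ≫ (Groupoid.inv (u 0).2 ≫ θ u hu ≫ (u 0).2) ≫ Groupoid.inv (u 0).2 = θ u hu
  simp [Groupoid.inv_eq_inv]

end

theorem stmt3_general {Φ : Type*} [Groupoid Φ] (e : Φ) (M : Set Φ)
    (nbM : M → M → Prop) (nbP : Bdl e M → Bdl e M → Prop)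
    (hcompat : ∀ x y : Bdl e M, nbP x y → nbM x.1 y.1)
    (hGinv : ∀ (x y : Bdl e M) (g : e ⟶ e), nbP x y → nbP (x.act g) (y.act g))
    (hne : ∀ a : M, Nonempty (e ⟶ (a : Φ)))
    (k : ℕ)
    (hsub : ∀ (a : Fin (k + 1) → M), (∀ i j, nbM (a i) (a j)) →
      ∀ x0 : e ⟶ (a 0 : Φ), ∃ x : (i : Fin (k + 1)) → (e ⟶ (a i : Φ)),
        x 0 = x0 ∧ IsSimplex nbP (fun i => ⟨a i, x i⟩)) :
    ∃ check : {θ : ∀ u : Fin (k + 1) → Bdl e M, IsSimplex nbP u → (e ⟶ e) //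
        Horizontal nbP θ ∧ Equivariant nbP θ} →
        ∀ a : Fin (k + 1) → M, (∀ i j, nbM (a i) (a j)) → ((a 0 : Φ) ⟶ (a 0 : Φ)),
      -- `check θ` is computed by the formula `θ̌(a) = u₀ ∘ θ(u) ∘ u₀⁻¹` for ANY lift `u`
      (∀ (θ : {θ : ∀ u : Fin (k + 1) → Bdl e M, IsSimplex nbP u → (e ⟶ e) //
          Horizontal nbP θ ∧ Equivariant nbP θ})
        (a : Fin (k + 1) → M) (ha : ∀ i j, nbM (a i) (a j))
        (x : (i : Fin (k + 1)) → (e ⟶ (a i : Φ)))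
        (hx : IsSimplex nbP (fun i => ⟨a i, x i⟩)),
        check θ a ha =
          Groupoid.inv (x 0) ≫ θ.1 (fun i => ⟨a i, x i⟩) hx ≫ x 0) ∧
      -- `α ↦ α̂` lands in horizontal equivariant forms
      (∀ α : ∀ a : Fin (k + 1) → M, (∀ i j, nbM (a i) (a j)) → ((a 0 : Φ) ⟶ (a 0 : Φ)),
        Horizontal nbP (hatForm hcompat α) ∧ Equivariant nbP (hatForm hcompat α)) ∧
      -- `check ∘ hat = id`
      (∀ (α : ∀ a : Fin (k + 1) → M, (∀ i j, nbM (a i) (a j)) → ((a 0 : Φ) ⟶ (a 0 : Φ)))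
        (hα : Horizontal nbP (hatForm hcompat α) ∧ Equivariant nbP (hatForm hcompat α)),
        check ⟨hatForm hcompat α, hα⟩ = α) ∧
      -- `hat ∘ check = id`
      (∀ θ : {θ : ∀ u : Fin (k + 1) → Bdl e M, IsSimplex nbP u → (e ⟶ e) //
          Horizontal nbP θ ∧ Equivariant nbP θ},
        hatForm hcompat (check θ) = θ.1) := by
  have hlift := exists_isSimplex_mkTuple hne hsub
  exact ⟨fun θ => checkForm hlift θ.1,
    fun θ a ha x hx => checkForm_eq hlift θ.2.1 θ.2.2 hGinv a ha x hx,
    fun α => ⟨horizontal_hatForm hcompat α, equivariant_hatForm hcompat α⟩,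
    fun α _ => checkForm_hatForm hcompat α hlift,
    fun θ => hatForm_checkForm hcompat hlift θ.2.1 θ.2.2 hGinv⟩

/-- the assignments `θ ↦ θ̌` (with
`θ̌(a₀,…,a_k) = u₀ ∘ θ(u₀,…,u_k) ∘ u₀⁻¹`, computed with any lift `(u₀,…,u_k)` of
`(a₀,…,a_k)`) and `α ↦ α̂` (with `α̂(u₀,…,u_k) = u₀⁻¹ ∘ α(π u₀,…,π u_k) ∘ u₀`)
are well defined and are mutually inverse bijections between the set of horizontal
equivariant `G`-valued `k`-forms on `P` and the set of gauge-valued `k`-forms on `M`.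
Well-definedness of `θ ↦ θ̌` is expressed by the existence of a map `check` on
gauge simplices whose value at the projection of ANY lift is given by the formula. -/
theorem stmt3 {Φ : Type*} [Groupoid Φ] (e : Φ) (M : Set Φ)
    (nbM : M → M → Prop) (nbP : Bdl e M → Bdl e M → Prop)
    (hMrefl : ∀ a, nbM a a) (hMsymm : ∀ a b, nbM a b → nbM b a)
    (hPrefl : ∀ x, nbP x x) (hPsymm : ∀ x y, nbP x y → nbP y x)
    (hcompat : ∀ x y : Bdl e M, nbP x y → nbM x.1 y.1)
    (hGinv : ∀ (x y : Bdl e M) (g : e ⟶ e), nbP x y → nbP (x.act g) (y.act g))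
    (hne : ∀ a : M, Nonempty (e ⟶ (a : Φ)))
    (k : ℕ)
    (hsub : ∀ (a : Fin (k + 1) → M), (∀ i j, nbM (a i) (a j)) →
      ∀ x0 : e ⟶ (a 0 : Φ), ∃ x : (i : Fin (k + 1)) → (e ⟶ (a i : Φ)),
        x 0 = x0 ∧ IsSimplex nbP (fun i => ⟨a i, x i⟩)) :
    ∃ check : {θ : ∀ u : Fin (k + 1) → Bdl e M, IsSimplex nbP u → (e ⟶ e) //
        Horizontal nbP θ ∧ Equivariant nbP θ} →
        ∀ a : Fin (k + 1) → M, (∀ i j, nbM (a i) (a j)) → ((a 0 : Φ) ⟶ (a 0 : Φ)),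
      -- `check θ` is computed by the formula `θ̌(a) = u₀ ∘ θ(u) ∘ u₀⁻¹` for ANY lift `u`
      (∀ (θ : {θ : ∀ u : Fin (k + 1) → Bdl e M, IsSimplex nbP u → (e ⟶ e) //
          Horizontal nbP θ ∧ Equivariant nbP θ})
        (a : Fin (k + 1) → M) (ha : ∀ i j, nbM (a i) (a j))
        (x : (i : Fin (k + 1)) → (e ⟶ (a i : Φ)))
        (hx : IsSimplex nbP (fun i => ⟨a i, x i⟩)),
        check θ a ha =
          Groupoid.inv (x 0) ≫ θ.1 (fun i => ⟨a i, x i⟩) hx ≫ x 0) ∧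
      -- `α ↦ α̂` lands in horizontal equivariant forms
      (∀ α : ∀ a : Fin (k + 1) → M, (∀ i j, nbM (a i) (a j)) → ((a 0 : Φ) ⟶ (a 0 : Φ)),
        Horizontal nbP (hatForm hcompat α) ∧ Equivariant nbP (hatForm hcompat α)) ∧
      -- `check ∘ hat = id`
      (∀ (α : ∀ a : Fin (k + 1) → M, (∀ i j, nbM (a i) (a j)) → ((a 0 : Φ) ⟶ (a 0 : Φ)))
        (hα : Horizontal nbP (hatForm hcompat α) ∧ Equivariant nbP (hatForm hcompat α)),
        check ⟨hatForm hcompat α, hα⟩ = α) ∧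
      -- `hat ∘ check = id`
      (∀ θ : {θ : ∀ u : Fin (k + 1) → Bdl e M, IsSimplex nbP u → (e ⟶ e) //
          Horizontal nbP θ ∧ Equivariant nbP θ},
        hatForm hcompat (check θ) = θ.1) :=
  stmt3_general e M nbM nbP hcompat hGinv hne k hsub
end

section
/- Assume G = Φ(e,e) is commutative, and let ∇ be a connection with connection form ω and curvature R. Then for every infinitesimal 2-simplex (a,b,c) in M, every x ∈ P_a, and every infinitesimal 2-simplex (x',y,z) in P with π(x') = a, π(y) = b, π(z) = c, one has x⁻¹ ∘ R(a,b,c) ∘ x = ω(x',y) ∘ ω(y,z) ∘ ω(z,x') = dω(x',y,z). In particular dω(x',y,z) depends only on (a,b,c), so it defines a G-valued 2-form Ω on M with π*Ω = dω, and Ω is the curvature R under the canonical identification of Φ(a,a) with G. -/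
open CategoryTheory

/-- assume `G = Φ(e,e)` is commutative, let `∇` be a connection with
connection form `ω` and curvature `R`.  For every infinitesimal 2-simplex `(a,b,c)`
in `M`, every `x ∈ P_a`, and every infinitesimal 2-simplex `(x',y,z)` in `P` over
`(a,b,c)`:  `x⁻¹ ∘ R(a,b,c) ∘ x = ω(x',y) ∘ ω(y,z) ∘ ω(z,x') = dω(x',y,z)`.
(In Lean's diagrammatic order the left side is `x ≫ R ≫ x⁻¹`, with
`R = ∇(c,a)-part ≫ ∇(b,c)-part ≫ ∇(a,b)-part`, and the right side is
`ω(z,x') ≫ ω(y,z) ≫ ω(x',y)`.)  In particular `dω` on `P` descends to the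
`G`-valued 2-form `Ω` on `M` which is `R` under the canonical identification. -/
theorem stmt5 {Φ : Type*} [Groupoid Φ] (e : Φ) (M : Set Φ)
    (nbM : M → M → Prop) (nbP : Bdl e M → Bdl e M → Prop)
    (hMrefl : ∀ a, nbM a a) (hMsymm : ∀ a b, nbM a b → nbM b a)
    (hPrefl : ∀ x, nbP x x) (hPsymm : ∀ x y, nbP x y → nbP y x)
    (hcompat : ∀ x y : Bdl e M, nbP x y → nbM x.1 y.1)
    (hcomm : ∀ g h : e ⟶ e, g ≫ h = h ≫ g)
    (D : Conn e M nbM)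
    (a b c : M) (hab : nbM a b) (hbc : nbM b c) (hca : nbM c a)
    (x : e ⟶ (a : Φ))
    (x' : e ⟶ (a : Φ)) (y : e ⟶ (b : Φ)) (z : e ⟶ (c : Φ))
    (hx'y : nbP ⟨a, x'⟩ ⟨b, y⟩) (hyz : nbP ⟨b, y⟩ ⟨c, z⟩)
    (hzx' : nbP ⟨c, z⟩ ⟨a, x'⟩) :
    x ≫ (D.map c a hca ≫ D.map b c hbc ≫ D.map a b hab) ≫ Groupoid.inv x
      = connForm D ⟨c, z⟩ ⟨a, x'⟩ (hcompat _ _ hzx') ≫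
          connForm D ⟨b, y⟩ ⟨c, z⟩ (hcompat _ _ hyz) ≫
          connForm D ⟨a, x'⟩ ⟨b, y⟩ (hcompat _ _ hx'y) := by
  have key : ∀ (u : e ⟶ (a : Φ)) (R : (a : Φ) ⟶ (a : Φ)),
      u ≫ R ≫ Groupoid.inv u = x ≫ R ≫ Groupoid.inv x := by
    intro u R
    have h1 : u ≫ R ≫ Groupoid.inv u
        = (u ≫ Groupoid.inv x) ≫ (x ≫ R ≫ Groupoid.inv x) ≫ (x ≫ Groupoid.inv u) := by
      simp [Groupoid.inv_eq_inv]
    rw [h1, hcomm]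
    simp [Groupoid.inv_eq_inv]
  simp only [connForm]
  have h2 : (x' ≫ D.map c a (hcompat _ _ hzx') ≫ Groupoid.inv z) ≫
      (z ≫ D.map b c (hcompat _ _ hyz) ≫ Groupoid.inv y) ≫
      (y ≫ D.map a b (hcompat _ _ hx'y) ≫ Groupoid.inv x')
      = x' ≫ (D.map c a hca ≫ D.map b c hbc ≫ D.map a b hab) ≫ Groupoid.inv x' := by
    simp [Groupoid.inv_eq_inv]
  rw [h2, key x']
end

section
/- Let ω be a G-valued 1-form on P (a function assigning to each pair x ∼ y in P an element ω(x,y) ∈ G with ω(x,x) = id_e and ω(y,x) = ω(x,y)⁻¹) satisfying: (i) ω(x·g, y) = g⁻¹ ∘ ω(x,y) whenever x ∼ y and x·g ∼ y; and (ii) ω(x·g, y·g) = g⁻¹ ∘ ω(x,y) ∘ g for all g ∈ G whenever x ∼ y. Assume ∼ on P is G-invariant (for every g ∈ G, x ∼ y implies x·g ∼ y·g). Then for every pair a ∼ b in M, the arrow u ∘ (v ∘ ω(v,u))⁻¹ : b → a of Φ is independent of the choices: for all u, u' ∈ P_a and all v, v' ∈ P_b with v ∼ u and v' ∼ u', one has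 u ∘ (v ∘ ω(v,u))⁻¹ = u' ∘ (v' ∘ ω(v',u'))⁻¹. -/
open CategoryTheory

/-- let `ω` be a `G`-valued 1-form on `P` (with `ω(x,x) = id`,
`ω(y,x) = ω(x,y)⁻¹`) satisfying conditions (i) and (ii), and assume `∼` on `P` is
`G`-invariant.  Then for every pair `a ∼ b` in `M` the arrow
`u ∘ (v ∘ ω(v,u))⁻¹ : b ⟶ a` (in Lean's diagrammatic order:
`(ω(v,u) ≫ v)⁻¹ ≫ u`) is independent of the choice of `u ∈ P_a` and `v ∈ P_b`
with `v ∼ u`. -/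
theorem stmt8 {Φ : Type*} [Groupoid Φ] (e : Φ) (M : Set Φ)
    (nbM : M → M → Prop) (nbP : Bdl e M → Bdl e M → Prop)
    (hMrefl : ∀ a, nbM a a) (hMsymm : ∀ a b, nbM a b → nbM b a)
    (hPrefl : ∀ x, nbP x x) (hPsymm : ∀ x y, nbP x y → nbP y x)
    (hcompat : ∀ x y : Bdl e M, nbP x y → nbM x.1 y.1)
    (hGinv : ∀ (x y : Bdl e M) (g : e ⟶ e), nbP x y → nbP (x.act g) (y.act g))
    (ω : ∀ x y : Bdl e M, nbP x y → (e ⟶ e))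
    (hrefl : ∀ (x : Bdl e M) (h : nbP x x), ω x x h = 𝟙 e)
    (hsymm : ∀ (x y : Bdl e M) (h : nbP x y) (h' : nbP y x),
      ω y x h' = Groupoid.inv (ω x y h))
    (hi : ∀ (x y : Bdl e M) (g : e ⟶ e) (h : nbP x y) (h' : nbP (x.act g) y),
      ω (x.act g) y h' = ω x y h ≫ Groupoid.inv g)
    (hii : ∀ (x y : Bdl e M) (g : e ⟶ e) (h : nbP x y) (h' : nbP (x.act g) (y.act g)),
      ω (x.act g) (y.act g) h' = g ≫ ω x y h ≫ Groupoid.inv g)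
    (a b : M) (hab : nbM a b)
    (u u' : e ⟶ (a : Φ)) (v v' : e ⟶ (b : Φ))
    (hvu : nbP ⟨b, v⟩ ⟨a, u⟩) (hv'u' : nbP ⟨b, v'⟩ ⟨a, u'⟩) :
    Groupoid.inv (ω ⟨b, v⟩ ⟨a, u⟩ hvu ≫ v) ≫ u
      = Groupoid.inv (ω ⟨b, v'⟩ ⟨a, u'⟩ hv'u' ≫ v') ≫ u' := by
  obtain ⟨h, rfl⟩ : ∃ h : e ⟶ e, v' = h ≫ v :=
    ⟨v' ≫ Groupoid.inv v, by simp⟩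
  obtain ⟨k, rfl⟩ : ∃ k : e ⟶ e, u' = k ≫ (h ≫ u) :=
    ⟨u' ≫ Groupoid.inv (h ≫ u), by simp⟩
  have huv : nbP (⟨a, u⟩ : Bdl e M) ⟨b, v⟩ := hPsymm _ _ hvu
  have h1 : nbP (Bdl.act ⟨a, u⟩ h) (Bdl.act ⟨b, v⟩ h) := hGinv _ _ h huv
  have e1 : ω ⟨b, h ≫ v⟩ ⟨a, k ≫ (h ≫ u)⟩ hv'u'
      = Groupoid.inv (ω ⟨a, k ≫ (h ≫ u)⟩ ⟨b, h ≫ v⟩ (hPsymm _ _ hv'u')) :=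
    hsymm _ _ _ hv'u'
  have e2 : ω ⟨a, k ≫ (h ≫ u)⟩ ⟨b, h ≫ v⟩ (hPsymm _ _ hv'u')
      = ω ⟨a, h ≫ u⟩ ⟨b, h ≫ v⟩ h1 ≫ Groupoid.inv k :=
    hi ⟨a, h ≫ u⟩ ⟨b, h ≫ v⟩ k h1 (hPsymm _ _ hv'u')
  have e3 : ω ⟨a, h ≫ u⟩ ⟨b, h ≫ v⟩ h1
      = h ≫ ω ⟨a, u⟩ ⟨b, v⟩ huv ≫ Groupoid.inv h :=
    hii ⟨a, u⟩ ⟨b, v⟩ h huv h1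
  have e4 : ω ⟨a, u⟩ ⟨b, v⟩ huv = Groupoid.inv (ω ⟨b, v⟩ ⟨a, u⟩ hvu) :=
    hsymm _ _ hvu huv
  rw [e1, e2, e3, e4]
  simp [Groupoid.inv_eq_inv]
end

section
/- Let θ be a horizontal equivariant G-valued k-form on P, and assume ∼ on P is G-invariant (for every g ∈ G, x ∼ y implies x·g ∼ y·g). Then for every infinitesimal k-simplex (a₀,…,a_k) in M, the element u₀ ∘ θ(u₀,…,u_k) ∘ u₀⁻¹ ∈ Φ(a₀,a₀) is independent of the choice of infinitesimal k-simplex (u₀,…,u_k) in P with π(u_i) = a_i for all i: any two such choices give the same element of Φ(a₀,a₀). -/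
open CategoryTheory

/-! Two lifts of the same simplex `(a₀,…,a_k)` differ fibrewise by elements of `G`. Acting
on the first lift by the single element `g` with `u₀·g = u₀'` changes `θ` to its conjugate
`g⁻¹ θ g`, which `u₀ ∘ - ∘ u₀⁻¹` undoes; the resulting simplex agrees with the second lift at
the vertex `0` and differs from it by the action at the other vertices, which horizontality
ignores. -/

section

variable {Φ : Type*} [Groupoid Φ] {e : Φ} {M : Set Φ} {nbP : Bdl e M → Bdl e M → Prop}
  {k : ℕ} {θ : ∀ u : Fin (k + 1) → Bdl e M, IsSimplex nbP u → (e ⟶ e)}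

theorem form_congr {u v : Fin (k + 1) → Bdl e M} (huv : u = v) (hu : IsSimplex nbP u)
    (hv : IsSimplex nbP v) : θ u hu = θ v hv := by
  subst huv; rfl

theorem Horizontal.eq_of_apply_zero_eq (hθ : Horizontal nbP θ) {a : Fin (k + 1) → M}
    {x y : ∀ i, e ⟶ (a i : Φ)} (hx : IsSimplex nbP (fun i => ⟨a i, x i⟩))
    (hy : IsSimplex nbP (fun i => ⟨a i, y i⟩)) (h0 : x 0 = y 0) :
    θ (fun i => ⟨a i, x i⟩) hx = θ (fun i => ⟨a i, y i⟩) hy := by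
  have hshift : (Fin.cases ⟨a 0, x 0⟩
      (fun i => Bdl.act ⟨a i.succ, x i.succ⟩ (y i.succ ≫ Groupoid.inv (x i.succ))) :
        Fin (k + 1) → Bdl e M) = fun i => ⟨a i, y i⟩ := by
    funext i
    cases i using Fin.cases with
    | zero => exact congrArg (Sigma.mk (a 0)) h0
    | succ i => exact congrArg (Sigma.mk (a i.succ)) (by simp [Groupoid.inv_eq_inv])
  exact ((form_congr hshift.symm hy _).trans (hθ _ _ hx (hshift ▸ hy))).symm

theorem Equivariant.conj_act_eq (hθ : Equivariant nbP θ) {a : Fin (k + 1) → M}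
    {x : ∀ i, e ⟶ (a i : Φ)} (hx : IsSimplex nbP (fun i => ⟨a i, x i⟩)) (g : e ⟶ e)
    (hgx : IsSimplex nbP (fun i => ⟨a i, g ≫ x i⟩)) :
    Groupoid.inv (g ≫ x 0) ≫ θ (fun i => ⟨a i, g ≫ x i⟩) hgx ≫ g ≫ x 0
      = Groupoid.inv (x 0) ≫ θ (fun i => ⟨a i, x i⟩) hx ≫ x 0 := by
  have hconj : θ (fun i => ⟨a i, g ≫ x i⟩) hgx = g ≫ θ _ hx ≫ Groupoid.inv g :=
    hθ _ g hx hgx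
  rw [hconj]
  simp [Groupoid.inv_eq_inv]

end

theorem stmt9_general {Φ : Type*} [Groupoid Φ] (e : Φ) (M : Set Φ)
    (nbP : Bdl e M → Bdl e M → Prop)
    (hGinv : ∀ (x y : Bdl e M) (g : e ⟶ e), nbP x y → nbP (x.act g) (y.act g))
    (k : ℕ)
    (θ : ∀ u : Fin (k + 1) → Bdl e M, IsSimplex nbP u → (e ⟶ e))
    (hhor : Horizontal nbP θ) (hequi : Equivariant nbP θ)
    (a : Fin (k + 1) → M)
    (x x' : (i : Fin (k + 1)) → (e ⟶ (a i : Φ)))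
    (hx : IsSimplex nbP (fun i => ⟨a i, x i⟩))
    (hx' : IsSimplex nbP (fun i => ⟨a i, x' i⟩)) :
    Groupoid.inv (x 0) ≫ θ (fun i => ⟨a i, x i⟩) hx ≫ x 0
      = Groupoid.inv (x' 0) ≫ θ (fun i => ⟨a i, x' i⟩) hx' ≫ x' 0 := by
  set g := x' 0 ≫ Groupoid.inv (x 0)
  have hgx : IsSimplex nbP (fun i => ⟨a i, g ≫ x i⟩) := fun i j => hGinv _ _ g (hx i j)
  have h0 : g ≫ x 0 = x' 0 := by simp [g, Groupoid.inv_eq_inv]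
  rw [← hequi.conj_act_eq hx g hgx, hhor.eq_of_apply_zero_eq hgx hx' h0, h0]

/-- let `θ` be a horizontal equivariant `G`-valued `k`-form on `P`,
with `∼` on `P` `G`-invariant.  For every infinitesimal `k`-simplex `(a₀,…,a_k)`
in `M`, the element `u₀ ∘ θ(u₀,…,u_k) ∘ u₀⁻¹ ∈ Φ(a₀,a₀)` (in Lean's diagrammatic
order: `u₀⁻¹ ≫ θ(u) ≫ u₀`) does not depend on the choice of lift `(u₀,…,u_k)`
of `(a₀,…,a_k)`. -/
theorem stmt9 {Φ : Type*} [Groupoid Φ] (e : Φ) (M : Set Φ)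
    (nbM : M → M → Prop) (nbP : Bdl e M → Bdl e M → Prop)
    (hMrefl : ∀ a, nbM a a) (hMsymm : ∀ a b, nbM a b → nbM b a)
    (hPrefl : ∀ x, nbP x x) (hPsymm : ∀ x y, nbP x y → nbP y x)
    (hcompat : ∀ x y : Bdl e M, nbP x y → nbM x.1 y.1)
    (hGinv : ∀ (x y : Bdl e M) (g : e ⟶ e), nbP x y → nbP (x.act g) (y.act g))
    (k : ℕ)
    (θ : ∀ u : Fin (k + 1) → Bdl e M, IsSimplex nbP u → (e ⟶ e))
    (hhor : Horizontal nbP θ) (hequi : Equivariant nbP θ)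
    (a : Fin (k + 1) → M)
    (x x' : (i : Fin (k + 1)) → (e ⟶ (a i : Φ)))
    (hx : IsSimplex nbP (fun i => ⟨a i, x i⟩))
    (hx' : IsSimplex nbP (fun i => ⟨a i, x' i⟩)) :
    Groupoid.inv (x 0) ≫ θ (fun i => ⟨a i, x i⟩) hx ≫ x 0
      = Groupoid.inv (x' 0) ≫ θ (fun i => ⟨a i, x' i⟩) hx' ≫ x' 0 :=
  stmt9_general e M nbP hGinv k θ hhor hequi a x x' hx hx'
end

section
/- Let α be a gauge-valued k-form on M, and define the G-valued k-form α̂ on P by α̂(u₀,…,u_k) = u₀⁻¹ ∘ α(π(u₀),…,π(u_k)) ∘ u₀. Then α̂ is horizontal and equivariant. -/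
open CategoryTheory

/-- for any gauge-valued `k`-form `α` on `M`, the `G`-valued
`k`-form `α̂` on `P`, given by `α̂(u₀,…,u_k) = u₀⁻¹ ∘ α(π u₀,…,π u_k) ∘ u₀`,
is horizontal and equivariant. -/
theorem stmt10 {Φ : Type*} [Groupoid Φ] (e : Φ) (M : Set Φ)
    (nbM : M → M → Prop) (nbP : Bdl e M → Bdl e M → Prop)
    (hMrefl : ∀ a, nbM a a) (hMsymm : ∀ a b, nbM a b → nbM b a)
    (hPrefl : ∀ x, nbP x x) (hPsymm : ∀ x y, nbP x y → nbP y x)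
    (hcompat : ∀ x y : Bdl e M, nbP x y → nbM x.1 y.1)
    (k : ℕ)
    (α : ∀ a : Fin (k + 1) → M, (∀ i j, nbM (a i) (a j)) → ((a 0 : Φ) ⟶ (a 0 : Φ))) :
    Horizontal nbP (hatForm hcompat α) ∧ Equivariant nbP (hatForm hcompat α) := by
  have key : ∀ (a b : Fin (k + 1) → M) (ha : ∀ i j, nbM (a i) (a j))
      (hb : ∀ i j, nbM (b i) (b j)) (x : e ⟶ (a 0 : Φ)) (y : e ⟶ (b 0 : Φ)),
      a = b → HEq x y →
      x ≫ α a ha ≫ Groupoid.inv x = y ≫ α b hb ≫ Groupoid.inv y := by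
    rintro a b ha hb x y rfl hxy
    cases hxy
    rfl
  constructor
  · intro u g hu hu'
    unfold hatForm
    have h1 : (fun i => ((Fin.cases (u 0) (fun i => (u i.succ).act (g i)) :
        Fin (k+1) → Bdl e M) i).1) = fun i => (u i).1 := by
      funext i
      induction i using Fin.cases <;> rfl
    exact key _ _ _ _ _ _ h1 HEq.rfl
  · intro u g hu hu'
    unfold hatForm
    simp only [Bdl.act, Groupoid.inv_eq_inv, IsIso.inv_comp, Category.assoc]
end
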